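/- In the dominated Bayesian experiment, the posterior predictive density b*_{Q,ω}(ω') := ∫_Θ p_θ(ω') p*_ω(θ) dQ(θ) is a μ-density of the posterior predictive distribution (P*_ω)^P, i.e., (P*_ω)^P(A) = ∫_A b*_{Q,ω}(ω') dμ(ω') for all A ∈ A. -/
import Mathlib


open MeasureTheory ProbabilityTheory
open scoped ENNReal

/-- In a dominated Bayesian experiment (likelihood `p_θ = dP_θ/dμ` jointly measurable,
posterior densities `p*_ω = dP*_ω/dQ`), the posterior predictive density
`b*_{Q,ω}(ω') := ∫_Θ p_θ(ω') p*_ω(θ) dQ(θ)` is a μ-density of the posterior predictive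
distribution `(P*_ω)^P`, i.e. `(P*_ω)^P(A) = ∫_A b*_{Q,ω}(ω') dμ(ω')` for all measurable `A`. -/
theorem posterior_predictive_density
    {Ω Θ : Type*} [MeasurableSpace Ω] [MeasurableSpace Θ]
    (μ : Measure Ω) [SigmaFinite μ]
    (P : Kernel Θ Ω) [IsMarkovKernel P]
    (p : Θ → Ω → ℝ≥0∞) (hp : Measurable (Function.uncurry p))
    (hdom : ∀ θ, P θ = μ.withDensity (p θ))
    (Q : Measure Θ) [IsProbabilityMeasure Q]
    (Pst : Kernel Ω Θ) [IsMarkovKernel Pst]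
    (ps : Ω → Θ → ℝ≥0∞) (hps : Measurable (Function.uncurry ps))
    (hpost : ∀ ω, Pst ω = Q.withDensity (ps ω)) :
    ∀ (ω : Ω) (A : Set Ω), MeasurableSet A →
      ∫⁻ θ, P θ A ∂(Pst ω) = ∫⁻ ω' in A, ∫⁻ θ, p θ ω' * ps ω θ ∂Q ∂μ := by
  intro ω A hA
  have hpsω : Measurable (ps ω) := hps.of_uncurry_left
  have hPA : ∀ θ, P θ A = ∫⁻ ω' in A, p θ ω' ∂μ := fun θ => by
    rw [hdom θ, withDensity_apply _ hA]
  have hmeas : Measurable fun θ => ∫⁻ ω' in A, p θ ω' ∂μ :=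
    hp.lintegral_prod_right'
  calc ∫⁻ θ, P θ A ∂(Pst ω)
      = ∫⁻ θ, ps ω θ * ∫⁻ ω' in A, p θ ω' ∂μ ∂Q := by
        simp only [hPA]
        rw [hpost ω, lintegral_withDensity_eq_lintegral_mul _ hpsω hmeas]
        simp only [Pi.mul_apply]
    _ = ∫⁻ θ, ∫⁻ ω' in A, p θ ω' * ps ω θ ∂μ ∂Q := by
        refine lintegral_congr fun θ => ?_
        rw [mul_comm]
        exact (lintegral_mul_const _ hp.of_uncurry_left).symm
    _ = ∫⁻ ω' in A, ∫⁻ θ, p θ ω' * ps ω θ ∂Q ∂μ := by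
        rw [lintegral_lintegral_swap]
        exact (hp.mul (hpsω.comp measurable_fst)).aemeasurable
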